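/- If gcd(r₁r₂, s₁s₂) = 1, then Ŝ_{r₁,s₁,r₂,s₂}(0, 0, 0, 0; D₁, D₂) = 0 unless D₁ = D₂, and in the case D₁ = D₂ = D it equals Euler's totient φ(D). -/

import Mathlib

open scoped BigOperators

/-- e(x) = exp(2πix). -/
noncomputable def e (x : ℝ) : ℂ := Complex.exp (2 * Real.pi * Complex.I * x)

/-- A choice of a pair `(Y, Z)` with `Y·b + Z·c ≡ 1 (mod D)`, when one exists. -/
noncomputable def YZ (D : ℕ) (b c : ℤ) : ℤ × ℤ :=
  letI := Classical.propDecidable (∃ p : ℤ × ℤ, p.1 * b + p.2 * c ≡ 1 [ZMOD (D : ℤ)])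
  if h : ∃ p : ℤ × ℤ, p.1 * b + p.2 * c ≡ 1 [ZMOD (D : ℤ)] then h.choose else (0, 0)

/-- The long Weyl element GL(3) Kloosterman sum
`S(n₁,m₂,m₁,n₂;D₁,D₂) = ∑ e((n₁B₁ + m₁(Y₁D₂ − Z₁B₂))/D₁ + (m₂B₂ + n₂(Y₂D₁ − Z₂B₁))/D₂)`,
where the sum runs over `B₁,C₁ mod D₁` and `B₂,C₂ mod D₂` with `gcd(B_j,C_j,D_j)=1` and
`D₁C₂ + B₁B₂ + D₂C₁ ≡ 0 mod D₁D₂`, and `Y_jB_j + Z_jC_j ≡ 1 mod D_j`. -/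
noncomputable def SKl (n₁ m₂ m₁ n₂ : ℤ) (D₁ D₂ : ℕ) : ℂ :=
  ∑ b₁ ∈ Finset.range D₁, ∑ c₁ ∈ Finset.range D₁,
    ∑ b₂ ∈ Finset.range D₂, ∑ c₂ ∈ Finset.range D₂,
      if Nat.gcd (Nat.gcd b₁ c₁) D₁ = 1 ∧ Nat.gcd (Nat.gcd b₂ c₂) D₂ = 1 ∧
          (D₁ : ℤ) * c₂ + (b₁ : ℤ) * b₂ + (D₂ : ℤ) * c₁ ≡ 0 [ZMOD ((D₁ : ℤ) * D₂)] then
        e ((((n₁ * b₁ + m₁ * ((YZ D₁ (b₁ : ℤ) (c₁ : ℤ)).1 * D₂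
                - (YZ D₁ (b₁ : ℤ) (c₁ : ℤ)).2 * b₂) : ℤ)) : ℝ) / (D₁ : ℝ)
          + (((m₂ * b₂ + n₂ * ((YZ D₂ (b₂ : ℤ) (c₂ : ℤ)).1 * D₁
                - (YZ D₂ (b₂ : ℤ) (c₂ : ℤ)).2 * b₁) : ℤ)) : ℝ) / (D₂ : ℝ))
      else 0

/-- The normalized Fourier transform of the long Weyl element Kloosterman sum:
`Ŝ_{r₁,s₁,r₂,s₂}(x₁,y₁,x₂,y₂;D₁,D₂) = (1/(D₁²D₂²)) ∑_{n₁,m₁ mod D₁} ∑_{n₂,m₂ mod D₂}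
  S(n₁r₁, m₂r₂, m₁s₁, n₂s₂; D₁,D₂) e(−(x₁m₁+y₁n₁)/D₁ − (x₂m₂+y₂n₂)/D₂)`. -/
noncomputable def Shat (r₁ s₁ r₂ s₂ x₁ y₁ x₂ y₂ : ℤ) (D₁ D₂ : ℕ) : ℂ :=
  (1 / ((D₁ : ℂ) ^ 2 * (D₂ : ℂ) ^ 2)) *
    ∑ n₁ ∈ Finset.range D₁, ∑ m₁ ∈ Finset.range D₁,
      ∑ n₂ ∈ Finset.range D₂, ∑ m₂ ∈ Finset.range D₂,
        SKl ((n₁ : ℤ) * r₁) ((m₂ : ℤ) * r₂) ((m₁ : ℤ) * s₁) ((n₂ : ℤ) * s₂) D₁ D₂ *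
          e (-(((x₁ * (m₁ : ℤ) + y₁ * (n₁ : ℤ) : ℤ) : ℝ) / (D₁ : ℝ))
            - ((x₂ * (m₂ : ℤ) + y₂ * (n₂ : ℤ) : ℤ) : ℝ) / (D₂ : ℝ))

/-! Orthogonality of additive characters turns `Ŝ(0,0,0,0)` into the number of summands
`(B₁, C₁, B₂, C₂)` of the Kloosterman sum whose phase is trivial at every frequency, i.e. with
`D₁ ∣ r₁B₁`, `D₁ ∣ s₁(Y₁D₂ - Z₁B₂)`, `D₂ ∣ s₂(Y₂D₁ - Z₂B₁)` and `D₂ ∣ r₂B₂`. Together with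
`Y₁B₁ + Z₁C₁ ≡ 1` and `D₂C₁ + B₁B₂ ≡ 0 (mod D₁)` these give `D₁ ∣ r₁D₂`, `D₁ ∣ s₁D₂` and
`D₁ ∣ s₁B₂`; since `r₁` and `s₁` are coprime, `D₁ ∣ D₂`, and symmetrically `D₂ ∣ D₁`.
When `D₁ = D₂ = D`, coprimality of `r₁, s₂` and of `r₂, s₁` forces `B₁ = B₂ = 0`, and the remaining
tuples are `(0, C, 0, -C)` with `C` a unit mod `D`: there are `φ(D)` of them. -/

open Finset

section BoxSum

variable {M : Type*} [AddCommMonoid M] (D₁ D₂ : ℕ)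

def boxSum (f : ℕ → ℕ → ℕ → ℕ → M) : M :=
  ∑ a ∈ range D₁, ∑ b ∈ range D₁, ∑ c ∈ range D₂, ∑ d ∈ range D₂, f a b c d

lemma boxSum_eq_sum_product (f : ℕ → ℕ → ℕ → ℕ → M) :
    boxSum D₁ D₂ f = ∑ p ∈ range D₁ ×ˢ range D₁ ×ˢ range D₂ ×ˢ range D₂,
      f p.1 p.2.1 p.2.2.1 p.2.2.2 := by
  simp only [boxSum, sum_product]

lemma boxSum_comm (f : ℕ → ℕ → ℕ → ℕ → ℕ → ℕ → ℕ → ℕ → M) :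
    boxSum D₁ D₂ (fun a b c d => boxSum D₁ D₂ (f a b c d)) =
      boxSum D₁ D₂ (fun a' b' c' d' => boxSum D₁ D₂ fun a b c d => f a b c d a' b' c' d') := by
  simp only [boxSum_eq_sum_product]
  exact sum_comm

lemma boxSum_congr {f g : ℕ → ℕ → ℕ → ℕ → M}
    (h : ∀ a < D₁, ∀ b < D₁, ∀ c < D₂, ∀ d < D₂, f a b c d = g a b c d) :
    boxSum D₁ D₂ f = boxSum D₁ D₂ g := by
  simp only [boxSum_eq_sum_product]
  refine sum_congr rfl fun p hp => ?_
  simp only [mem_product, mem_range] at hp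
  exact h _ hp.1 _ hp.2.1 _ hp.2.2.1 _ hp.2.2.2

lemma boxSum_eq_zero {f : ℕ → ℕ → ℕ → ℕ → M} (h : ∀ a b c d, f a b c d = 0) :
    boxSum D₁ D₂ f = 0 := by
  simp [boxSum, h]

lemma boxSum_ite_const (p : Prop) [Decidable p] (f : ℕ → ℕ → ℕ → ℕ → M) :
    (boxSum D₁ D₂ fun a b c d => if p then f a b c d else 0) = if p then boxSum D₁ D₂ f else 0 := by
  split_ifs <;> simp [boxSum]

lemma mul_boxSum {R : Type*} [NonUnitalNonAssocSemiring R] (x : R) (f : ℕ → ℕ → ℕ → ℕ → R) :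
    x * boxSum D₁ D₂ f = boxSum D₁ D₂ fun a b c d => x * f a b c d := by
  simp only [boxSum, mul_sum]

lemma boxSum_mul_mul_mul {R : Type*} [NonUnitalNonAssocSemiring R] (f g h k : ℕ → R) :
    boxSum D₁ D₂ (fun a b c d => f a * g b * h c * k d) =
      (∑ a ∈ range D₁, f a) * (∑ b ∈ range D₁, g b) * (∑ c ∈ range D₂, h c) *
        ∑ d ∈ range D₂, k d := by
  simp only [boxSum, ← sum_mul, ← mul_sum]

end BoxSum

lemma e_add (x y : ℝ) : e (x + y) = e x * e y := by
  simp only [e, ← Complex.exp_add]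
  push_cast
  ring_nf

lemma e_nat_mul (n : ℕ) (x : ℝ) : e (n * x) = e x ^ n := by
  simp only [e, ← Complex.exp_nat_mul]
  push_cast
  ring_nf

lemma e_eq_one_iff (x : ℝ) : e x = 1 ↔ ∃ k : ℤ, x = k := by
  simp only [e, Complex.exp_eq_one_iff]
  refine exists_congr fun k => ?_
  rw [mul_comm, mul_left_inj' (by simp [Real.pi_ne_zero]), ← Complex.ofReal_intCast,
    Complex.ofReal_inj]

lemma e_intCast_div_eq_one_iff {D : ℕ} (hD : 0 < D) (a : ℤ) :
    e (a / D) = 1 ↔ (D : ℤ) ∣ a := by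
  have hD' : (D : ℝ) ≠ 0 := by positivity
  rw [e_eq_one_iff]
  refine exists_congr fun k => ?_
  rw [div_eq_iff hD', mul_comm]
  norm_cast

lemma sum_range_e_mul_div {D : ℕ} (hD : 0 < D) (a : ℤ) :
    ∑ n ∈ range D, e ((n * a : ℤ) / D) = if (D : ℤ) ∣ a then (D : ℂ) else 0 := by
  have hpow : ∀ n : ℕ, e ((n * a : ℤ) / D) = e (a / D) ^ n := fun n => by
    rw [← e_nat_mul]; push_cast; ring_nf
  have hpow_D : e (a / D) ^ D = 1 := by
    rw [← e_nat_mul, mul_div_cancel₀ _ (by positivity)]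
    exact (e_eq_one_iff _).2 ⟨a, rfl⟩
  simp only [hpow]
  split_ifs with h
  · simp [(e_intCast_div_eq_one_iff hD a).2 h]
  · rw [geom_sum_eq (mt (e_intCast_div_eq_one_iff hD a).1 h), hpow_D, sub_self, zero_div]

lemma boxSum_e_eq_ite {D₁ D₂ : ℕ} (hD₁ : 0 < D₁) (hD₂ : 0 < D₂) (a b c d : ℤ) :
    boxSum D₁ D₂ (fun n₁ m₁ n₂ m₂ =>
        e (((n₁ * a + m₁ * b : ℤ) : ℝ) / D₁ + ((m₂ * d + n₂ * c : ℤ) : ℝ) / D₂)) =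
      if (D₁ : ℤ) ∣ a ∧ (D₁ : ℤ) ∣ b ∧ (D₂ : ℤ) ∣ c ∧ (D₂ : ℤ) ∣ d then
        (D₁ : ℂ) ^ 2 * D₂ ^ 2 else 0 := by
  have hsplit : ∀ n₁ m₁ n₂ m₂ : ℕ,
      e (((n₁ * a + m₁ * b : ℤ) : ℝ) / D₁ + ((m₂ * d + n₂ * c : ℤ) : ℝ) / D₂) =
        e ((n₁ * a : ℤ) / D₁) * e ((m₁ * b : ℤ) / D₁) * e ((n₂ * c : ℤ) / D₂) *
          e ((m₂ * d : ℤ) / D₂) := fun n₁ m₁ n₂ m₂ => by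
    simp only [← e_add]
    push_cast
    ring_nf
  simp only [hsplit, boxSum_mul_mul_mul, sum_range_e_mul_div hD₁, sum_range_e_mul_div hD₂,
    ite_and]
  split_ifs <;> ring

def IsCentralTuple (r₁ s₁ r₂ s₂ : ℤ) (D₁ D₂ b₁ c₁ b₂ c₂ : ℕ) : Prop :=
  (Nat.gcd (Nat.gcd b₁ c₁) D₁ = 1 ∧ Nat.gcd (Nat.gcd b₂ c₂) D₂ = 1 ∧
      (D₁ : ℤ) * c₂ + (b₁ : ℤ) * b₂ + (D₂ : ℤ) * c₁ ≡ 0 [ZMOD ((D₁ : ℤ) * D₂)]) ∧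
    (D₁ : ℤ) ∣ r₁ * b₁ ∧ (D₁ : ℤ) ∣ s₁ * ((YZ D₁ b₁ c₁).1 * D₂ - (YZ D₁ b₁ c₁).2 * b₂) ∧
    (D₂ : ℤ) ∣ s₂ * ((YZ D₂ b₂ c₂).1 * D₁ - (YZ D₂ b₂ c₂).2 * b₁) ∧ (D₂ : ℤ) ∣ r₂ * b₂

noncomputable instance (r₁ s₁ r₂ s₂ : ℤ) (D₁ D₂ b₁ c₁ b₂ c₂ : ℕ) :
    Decidable (IsCentralTuple r₁ s₁ r₂ s₂ D₁ D₂ b₁ c₁ b₂ c₂) := by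
  unfold IsCentralTuple
  infer_instance

lemma shat_zero_eq_boxSum (r₁ s₁ r₂ s₂ : ℤ) {D₁ D₂ : ℕ} (hD₁ : 0 < D₁) (hD₂ : 0 < D₂) :
    Shat r₁ s₁ r₂ s₂ 0 0 0 0 D₁ D₂ = boxSum D₁ D₂ fun b₁ c₁ b₂ c₂ =>
      if IsCentralTuple r₁ s₁ r₂ s₂ D₁ D₂ b₁ c₁ b₂ c₂ then 1 else 0 := by
  have hN : (D₁ : ℂ) ^ 2 * D₂ ^ 2 ≠ 0 := by simp [hD₁.ne', hD₂.ne']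
  have h : Shat r₁ s₁ r₂ s₂ 0 0 0 0 D₁ D₂ = ((D₁ : ℂ) ^ 2 * D₂ ^ 2)⁻¹ *
      boxSum D₁ D₂ fun n₁ m₁ n₂ m₂ => SKl (n₁ * r₁) (m₂ * r₂) (m₁ * s₁) (n₂ * s₂) D₁ D₂ := by
    simp [Shat, boxSum, e]
  simp only [SKl, ← boxSum.eq_1] at h
  rw [h, boxSum_comm]
  simp only [mul_assoc, boxSum_ite_const, boxSum_e_eq_ite hD₁ hD₂, mul_boxSum]
  refine boxSum_congr _ _ fun b₁ _ c₁ _ b₂ _ c₂ _ => ?_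
  split_ifs <;> unfold IsCentralTuple at * <;> first | tauto | exact inv_mul_cancel₀ hN | simp

lemma exists_mul_add_mul_modEq_one {D b c : ℕ} (h : Nat.gcd (Nat.gcd b c) D = 1) :
    ∃ p : ℤ × ℤ, p.1 * b + p.2 * c ≡ 1 [ZMOD D] := by
  obtain ⟨u, v, huv⟩ := Nat.isCoprime_iff_coprime.mpr h
  refine ⟨(u * Int.gcdA b c, u * Int.gcdB b c), Int.modEq_iff_dvd.mpr ⟨v, ?_⟩⟩
  have hbez : (Nat.gcd b c : ℤ) = b * Int.gcdA b c + c * Int.gcdB b c := Int.gcd_eq_gcd_ab b c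
  linear_combination -huv + u * hbez

lemma dvd_YZ_mul_add_YZ_mul_sub_one {D b c : ℕ} (h : Nat.gcd (Nat.gcd b c) D = 1) :
    (D : ℤ) ∣ (YZ D b c).1 * b + (YZ D b c).2 * c - 1 := by
  have hex := exists_mul_add_mul_modEq_one h
  rw [YZ, dif_pos hex]
  exact hex.choose_spec.symm.dvd

namespace Kloosterman

-- `N, D, b, c, b'` stand for `D₁, D₂, B₁, C₁, B₂`, and `Y, Z` for the Bezout pair of `B₁, C₁`.
variable {R : Type*} [CommRing R] {N D b c b' Y Z : R}

theorem dvd_mul_D_of_dvd_mul_b (hYZ : N ∣ Y * b + Z * c - 1) (hM : N ∣ D * c + b * b')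
    {r : R} (hr : N ∣ r * b) : N ∣ r * D := by
  have key : r * D = Y * D * (r * b) + Z * r * (D * c + b * b') - Z * b' * (r * b)
      - r * D * (Y * b + Z * c - 1) := by ring
  rw [key]
  exact (((hr.mul_left _).add (hM.mul_left _)).sub (hr.mul_left _)).sub (hYZ.mul_left _)

theorem dvd_mul_D_of_dvd_mul_sub (hYZ : N ∣ Y * b + Z * c - 1) (hM : N ∣ D * c + b * b')
    {s : R} (hs : N ∣ s * (Y * D - Z * b')) : N ∣ s * D := by
  have key : s * D = b * (s * (Y * D - Z * b')) + s * Z * (D * c + b * b')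
      - s * D * (Y * b + Z * c - 1) := by ring
  rw [key]
  exact ((hs.mul_left _).add (hM.mul_left _)).sub (hYZ.mul_left _)

theorem dvd_mul_b'_of_dvd_mul_sub (hYZ : N ∣ Y * b + Z * c - 1) (hM : N ∣ D * c + b * b')
    {s : R} (hs : N ∣ s * (Y * D - Z * b')) : N ∣ s * b' := by
  have key : s * b' = Y * s * (D * c + b * b') - c * (s * (Y * D - Z * b'))
      - s * b' * (Y * b + Z * c - 1) := by ring
  rw [key]
  exact ((hM.mul_left _).sub (hs.mul_left _)).sub (hYZ.mul_left _)

end Kloosterman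

theorem IsCoprime.dvd_of_dvd_mul_of_dvd_mul {R : Type*} [CommRing R] {r s N x : R}
    (h : IsCoprime r s) (hr : N ∣ r * x) (hs : N ∣ s * x) : N ∣ x := by
  obtain ⟨u, v, huv⟩ := h
  rw [← one_mul x, ← huv, add_mul, mul_assoc, mul_assoc]
  exact (hr.mul_left u).add (hs.mul_left v)

namespace IsCentralTuple

variable {r₁ s₁ r₂ s₂ : ℤ} {D₁ D₂ b₁ c₁ b₂ c₂ : ℕ}

theorem symm (h : IsCentralTuple r₁ s₁ r₂ s₂ D₁ D₂ b₁ c₁ b₂ c₂) :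
    IsCentralTuple r₂ s₂ r₁ s₁ D₂ D₁ b₂ c₂ b₁ c₁ := by
  obtain ⟨⟨hg₁, hg₂, hM⟩, h₁, h₂, h₃, h₄⟩ := h
  refine ⟨⟨hg₂, hg₁, ?_⟩, h₄, h₃, h₂, h₁⟩
  convert hM using 1 <;> ring

theorem dvd_left (h : IsCentralTuple r₁ s₁ r₂ s₂ D₁ D₂ b₁ c₁ b₂ c₂) :
    (D₁ : ℤ) ∣ r₁ * D₂ ∧ (D₁ : ℤ) ∣ s₁ * D₂ ∧ (D₁ : ℤ) ∣ s₁ * b₂ := by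
  obtain ⟨⟨hg₁, -, hM⟩, h₁, h₂, -, -⟩ := h
  have hYZ := dvd_YZ_mul_add_YZ_mul_sub_one hg₁
  have hM₁ : (D₁ : ℤ) ∣ D₂ * c₁ + b₁ * b₂ := by
    have := (dvd_mul_right _ _).trans (Int.modEq_zero_iff_dvd.mp hM)
    rwa [add_assoc, add_comm, add_comm (b₁ * b₂ : ℤ), Int.dvd_add_left (dvd_mul_right _ _)]
      at this
  exact ⟨Kloosterman.dvd_mul_D_of_dvd_mul_b hYZ hM₁ h₁,
    Kloosterman.dvd_mul_D_of_dvd_mul_sub hYZ hM₁ h₂,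
    Kloosterman.dvd_mul_b'_of_dvd_mul_sub hYZ hM₁ h₂⟩

theorem modulus_eq (hcop : IsCoprime (r₁ * r₂) (s₁ * s₂))
    (h : IsCentralTuple r₁ s₁ r₂ s₂ D₁ D₂ b₁ c₁ b₂ c₂) : D₁ = D₂ := by
  obtain ⟨hr₁, hs₁, -⟩ := h.dvd_left
  obtain ⟨hr₂, hs₂, -⟩ := h.symm.dvd_left
  have h₁₂ := hcop.of_mul_left_left.of_mul_right_left.dvd_of_dvd_mul_of_dvd_mul hr₁ hs₁
  have h₂₁ := hcop.of_mul_left_right.of_mul_right_right.dvd_of_dvd_mul_of_dvd_mul hr₂ hs₂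
  exact Nat.dvd_antisymm (Int.natCast_dvd_natCast.mp h₁₂) (Int.natCast_dvd_natCast.mp h₂₁)

end IsCentralTuple

lemma eq_val_neg_iff_dvd_add {D c₁ c₂ : ℕ} [NeZero D] (hc₂ : c₂ < D) :
    c₂ = (-(c₁ : ZMod D)).val ↔ (D : ℤ) ∣ c₁ + c₂ := by
  have hval : c₂ = (-(c₁ : ZMod D)).val ↔ (c₂ : ZMod D) = -c₁ :=
    ⟨fun h => h ▸ ZMod.natCast_zmod_val _, fun h => by rw [← h, ZMod.val_natCast_of_lt hc₂]⟩
  rw [hval, eq_neg_iff_add_eq_zero, add_comm, ← ZMod.intCast_zmod_eq_zero_iff_dvd]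
  push_cast
  rfl

lemma coprime_val_neg {D c : ℕ} [NeZero D] (hc : c.Coprime D) :
    (-(c : ZMod D)).val.Coprime D := by
  rw [← ZMod.isUnit_iff_coprime, ZMod.natCast_zmod_val]
  exact ((ZMod.isUnit_iff_coprime _ _).mpr hc).neg

theorem isCentralTuple_self_iff {r₁ s₁ r₂ s₂ : ℤ} (hcop : IsCoprime (r₁ * r₂) (s₁ * s₂))
    {D b₁ c₁ b₂ c₂ : ℕ} (hb₁ : b₁ < D) (hb₂ : b₂ < D) (hc₂ : c₂ < D) :
    IsCentralTuple r₁ s₁ r₂ s₂ D D b₁ c₁ b₂ c₂ ↔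
      b₁ = 0 ∧ b₂ = 0 ∧ c₁.Coprime D ∧ c₂ = (-(c₁ : ZMod D)).val := by
  have : NeZero D := ⟨by omega⟩
  have hD : (D : ℤ) ≠ 0 := by exact_mod_cast NeZero.ne D
  have hcc : (D : ℤ) * c₂ + (0 : ℕ) * (0 : ℕ) + D * c₁ = D * (c₁ + c₂) := by push_cast; ring
  constructor
  · intro h
    obtain ⟨-, -, hs₁⟩ := h.dvd_left
    obtain ⟨-, -, hs₂⟩ := h.symm.dvd_left
    obtain ⟨⟨hg₁, -, hM⟩, hr₁, -, -, hr₂⟩ := h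
    obtain rfl : b₁ = 0 := Nat.eq_zero_of_dvd_of_lt (Int.natCast_dvd_natCast.mp
      (hcop.of_mul_left_left.of_mul_right_right.dvd_of_dvd_mul_of_dvd_mul hr₁ hs₂)) hb₁
    obtain rfl : b₂ = 0 := Nat.eq_zero_of_dvd_of_lt (Int.natCast_dvd_natCast.mp
      (hcop.of_mul_left_right.of_mul_right_left.dvd_of_dvd_mul_of_dvd_mul hr₂ hs₁)) hb₂
    rw [Int.modEq_zero_iff_dvd, hcc, mul_dvd_mul_iff_left hD] at hM
    exact ⟨rfl, rfl, by simpa using hg₁, (eq_val_neg_iff_dvd_add hc₂).mpr hM⟩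
  · rintro ⟨rfl, rfl, hc₁, rfl⟩
    refine ⟨⟨by simpa using hc₁, by simpa using coprime_val_neg hc₁, ?_⟩, by simp, ?_, ?_, by simp⟩
    · rw [Int.modEq_zero_iff_dvd, hcc]
      exact mul_dvd_mul_left _ ((eq_val_neg_iff_dvd_add hc₂).mp rfl)
    all_goals exact Dvd.dvd.mul_left (by simp) _

theorem boxSum_isCentralTuple_self {r₁ s₁ r₂ s₂ : ℤ} (hcop : IsCoprime (r₁ * r₂) (s₁ * s₂))
    {D : ℕ} (hD : 0 < D) :
    (boxSum D D fun b₁ c₁ b₂ c₂ =>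
      if IsCentralTuple r₁ s₁ r₂ s₂ D D b₁ c₁ b₂ c₂ then (1 : ℂ) else 0) = D.totient := by
  have : NeZero D := ⟨hD.ne'⟩
  rw [boxSum_congr D D fun b₁ hb₁ c₁ _ b₂ hb₂ c₂ hc₂ =>
    if_congr (isCentralTuple_self_iff hcop hb₁ hb₂ hc₂) rfl rfl]
  simp only [boxSum, ite_and, sum_ite_irrel, sum_const_zero, sum_ite_eq', mem_range, hD,
    ZMod.val_lt, if_true]
  rw [sum_boole, Nat.totient_eq_card_coprime]
  simp [Nat.coprime_comm]

theorem shat_central_term_general (r₁ s₁ r₂ s₂ : ℤ)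
    (hcop : Int.gcd (r₁ * r₂) (s₁ * s₂) = 1)
    (D₁ D₂ : ℕ) (hD₁ : 0 < D₁) (hD₂ : 0 < D₂) :
    (Shat r₁ s₁ r₂ s₂ 0 0 0 0 D₁ D₂ ≠ 0 → D₁ = D₂) ∧
      (D₁ = D₂ → Shat r₁ s₁ r₂ s₂ 0 0 0 0 D₁ D₂ = (Nat.totient D₁ : ℂ)) := by
  have hcop' : IsCoprime (r₁ * r₂) (s₁ * s₂) := Int.isCoprime_iff_gcd_eq_one.mpr hcop
  rw [shat_zero_eq_boxSum r₁ s₁ r₂ s₂ hD₁ hD₂]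
  refine ⟨fun hne => ?_, fun hD => ?_⟩
  · by_contra hD
    exact hne (boxSum_eq_zero D₁ D₂ fun b₁ c₁ b₂ c₂ => if_neg fun h => hD (h.modulus_eq hcop'))
  · subst hD
    exact boxSum_isCentralTuple_self hcop' hD₁

theorem shat_central_term (r₁ s₁ r₂ s₂ : ℤ)
    (hr₁ : r₁ ≠ 0) (hs₁ : s₁ ≠ 0) (hr₂ : r₂ ≠ 0) (hs₂ : s₂ ≠ 0)
    (hcop : Int.gcd (r₁ * r₂) (s₁ * s₂) = 1)
    (D₁ D₂ : ℕ) (hD₁ : 0 < D₁) (hD₂ : 0 < D₂) :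
    (Shat r₁ s₁ r₂ s₂ 0 0 0 0 D₁ D₂ ≠ 0 → D₁ = D₂) ∧
      (D₁ = D₂ → Shat r₁ s₁ r₂ s₂ 0 0 0 0 D₁ D₂ = (Nat.totient D₁ : ℂ)) :=
  shat_central_term_general r₁ s₁ r₂ s₂ hcop D₁ D₂ hD₁ hD₂
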